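/- arXiv:2005.02191 — 3 statements merged into one kernel-verified Lean document; each statement's English description precedes it below -/
import Mathlib

section
/- Let t ≥ 1, let j ∈ {1,…,t}, let L ≥ 0, and let A be a real symmetric t×t matrix such that A_{αβ} = 0 whenever α ≠ j and β ≠ j, and such that |A_{jα}| ≤ L for all α ∈ {1,…,t}. Then every eigenvalue λ of A satisfies λ ≤ L·(1 + √(1 + 4t))/2 ≤ 2·L·√t. In particular, the maximal eigenvalue of A is at most 2L√t. -/
open Matrix Finset

lemma term_bound_aux (L c a b s : ℝ) (hL : 0 ≤ L) (hc : 0 < c) (ha : |a| ≤ L) :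
    s * (a * b) * 2 ≤ L / c * s ^ 2 + L * c * b ^ 2 := by
  rcases hL.eq_or_lt with h | h
  · have ha0 : a = 0 := abs_nonpos_iff.mp (h ▸ ha)
    simp [ha0, ← h]
  · have h1 : a ^ 2 ≤ L ^ 2 := by nlinarith [sq_abs a, abs_nonneg a]
    have h2 := sq_nonneg (a * s - L * c * b)
    have h3 : 0 ≤ (L ^ 2 - a ^ 2) * s ^ 2 := mul_nonneg (by linarith) (sq_nonneg s)
    have key : c * (s * (a * b) * 2) ≤ c * (L / c * s ^ 2 + L * c * b ^ 2) := by
      have hd : c * (L / c * s ^ 2) = L * s ^ 2 := by field_simp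
      rw [mul_add, hd]
      nlinarith [h2, h3, h, hc, sq_nonneg s, sq_nonneg b]
    exact le_of_mul_le_mul_left key hc

lemma quad_bound_aux (t : ℕ) (j : Fin t) (L : ℝ) (hL : 0 ≤ L)
    (A : Matrix (Fin t) (Fin t) ℝ)
    (hsym : ∀ α β : Fin t, A α β = A β α)
    (hzero : ∀ α β : Fin t, α ≠ j → β ≠ j → A α β = 0)
    (hbound : ∀ α : Fin t, |A j α| ≤ L)
    (v : Fin t → ℝ) (hv : ∑ α, v α ^ 2 = 1) :
    ∑ α, v α * (A *ᵥ v) α ≤ L * (1 + Real.sqrt (1 + 4 * t)) / 2 := by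
  set c : ℝ := (1 + Real.sqrt (1 + 4 * t)) / 2 with hc
  have hs : Real.sqrt (1 + 4 * t) ^ 2 = 1 + 4 * t := Real.sq_sqrt (by positivity)
  have hsn : 0 ≤ Real.sqrt (1 + 4 * t) := Real.sqrt_nonneg _
  have htn : (0:ℝ) ≤ t := Nat.cast_nonneg t
  have hs1 : (1:ℝ) ≤ Real.sqrt (1 + 4 * t) := by nlinarith
  have hcpos : 0 < c := by rw [hc]; nlinarith
  have hc2 : c ^ 2 = c + t := by rw [hc]; nlinarith
  have hsplit : ∑ α, v α * (A *ᵥ v) α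
      = A j j * v j ^ 2 + ∑ β ∈ univ.erase j, v j * (A j β * v β) * 2 := by
    simp only [mulVec, dotProduct]
    rw [← Finset.add_sum_erase _ (fun α => v α * ∑ β, A α β * v β) (mem_univ j)]
    rw [← Finset.add_sum_erase _ (fun β => A j β * v β) (mem_univ j)]
    have h2 : ∀ α ∈ univ.erase j, v α * ∑ β, A α β * v β = v j * (A j α * v α) := by
      intro α hα
      have hαj : α ≠ j := (Finset.mem_erase.mp hα).1
      rw [Finset.sum_eq_single j]
      · rw [hsym α j]; ring
      · intro β _ hβ; rw [hzero α β hαj hβ]; ring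
      · simp
    rw [Finset.sum_congr rfl h2, mul_add, Finset.mul_sum, add_assoc,
      ← Finset.sum_add_distrib]
    congr 1
    · ring
    · exact Finset.sum_congr rfl fun β _ => by ring
  rw [hsplit]
  have hrest : ∑ β ∈ univ.erase j, v β ^ 2 = 1 - v j ^ 2 := by
    have h := Finset.sum_erase_add univ (fun β => v β ^ 2) (mem_univ j)
    rw [hv] at h
    linarith
  have hterm : ∀ β ∈ univ.erase j,
      v j * (A j β * v β) * 2 ≤ L / c * v j ^ 2 + L * c * v β ^ 2 :=
    fun β _ => term_bound_aux L c (A j β) (v β) (v j) hL hcpos (hbound β)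
  have hsum := Finset.sum_le_sum hterm
  rw [Finset.sum_add_distrib, Finset.sum_const, nsmul_eq_mul, ← Finset.mul_sum,
    hrest] at hsum
  have hcard' : ((univ.erase j).card : ℝ) ≤ t := by
    have : (univ.erase j).card ≤ t := by
      simp [Finset.card_erase_of_mem]
    exact_mod_cast this
  have hjj : A j j ≤ L := le_trans (le_abs_self _) (hbound j)
  have hLc : 0 ≤ L / c := div_nonneg hL hcpos.le
  have hkey0 : L + (t:ℝ) * (L / c) = L * c := by
    field_simp
    linear_combination L * hc2 - (L / 2) * hs
  have h1 : ((univ.erase j).card : ℝ) * (L / c * v j ^ 2) ≤ t * (L / c * v j ^ 2) :=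
    mul_le_mul_of_nonneg_right hcard' (by positivity)
  have h2 : A j j * v j ^ 2 ≤ L * v j ^ 2 := mul_le_mul_of_nonneg_right hjj (sq_nonneg _)
  have h3 : L * v j ^ 2 + t * (L / c * v j ^ 2) + L * c * (1 - v j ^ 2) ≤ L * c := by
    nlinarith [hkey0, sq_nonneg (v j)]
  have hfin : L * c = L * (1 + Real.sqrt (1 + 4 * t)) / 2 := by rw [hc]; ring
  nlinarith [hsum, h1, h2, h3]

/-- **Lemma 3 of the paper.** Let `A` be a real symmetric `t×t`
matrix (`t ≥ 1`) whose nonzero entries all lie in row `j` and column `j`, with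
`|A j α| ≤ L` for all `α`. Then every eigenvalue of `A` is at most
`L(1 + √(1 + 4t))/2 ≤ 2L√t`. -/
theorem eigenvalue_bound_arrow_matrix (t : ℕ) (ht : 1 ≤ t) (j : Fin t) (L : ℝ) (hL : 0 ≤ L)
    (A : Matrix (Fin t) (Fin t) ℝ) (hA : A.IsHermitian)
    (hzero : ∀ α β : Fin t, α ≠ j → β ≠ j → A α β = 0)
    (hbound : ∀ α : Fin t, |A j α| ≤ L) :
    (∀ i : Fin t, hA.eigenvalues i ≤ L * (1 + Real.sqrt (1 + 4 * t)) / 2) ∧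
      L * (1 + Real.sqrt (1 + 4 * t)) / 2 ≤ 2 * L * Real.sqrt t := by
  constructor
  · intro i
    set v : Fin t → ℝ := ⇑(hA.eigenvectorBasis i) with hvdef
    have hnorm : ∑ α, v α ^ 2 = 1 := by
      have h1 := hA.eigenvectorBasis.orthonormal.1 i
      rw [EuclideanSpace.norm_eq, Real.sqrt_eq_one] at h1
      simpa using h1
    have hev : A *ᵥ v = hA.eigenvalues i • v := hA.mulVec_eigenvectorBasis i
    have hsym : ∀ α β : Fin t, A α β = A β α := by
      intro α β
      have := congrFun (congrFun hA β) α
      simpa using this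
    have hq := quad_bound_aux t j L hL A hsym hzero hbound v hnorm
    have heq : ∑ α, v α * (A *ᵥ v) α = hA.eigenvalues i := by
      rw [hev]
      simp only [Pi.smul_apply, smul_eq_mul]
      have : ∑ α, v α * (hA.eigenvalues i * v α)
          = hA.eigenvalues i * ∑ α, v α ^ 2 := by
        rw [Finset.mul_sum]
        exact Finset.sum_congr rfl fun α _ => by ring
      rw [this, hnorm, mul_one]
    linarith [hq, heq.symm.le]
  · have hst : Real.sqrt t ^ 2 = t := Real.sq_sqrt (Nat.cast_nonneg t)
    have hst1 : (1:ℝ) ≤ Real.sqrt t := by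
      rw [show (1:ℝ) = Real.sqrt 1 by simp]
      exact Real.sqrt_le_sqrt (by exact_mod_cast ht)
    have hsq : (1:ℝ) + 4 * t ≤ (4 * Real.sqrt t - 1) ^ 2 := by nlinarith
    have key : Real.sqrt (1 + 4 * t) ≤ 4 * Real.sqrt t - 1 := by
      calc Real.sqrt (1 + 4 * t) ≤ Real.sqrt ((4 * Real.sqrt t - 1) ^ 2) :=
            Real.sqrt_le_sqrt hsq
        _ = 4 * Real.sqrt t - 1 := Real.sqrt_sq (by linarith)
    have := mul_le_mul_of_nonneg_left key hL
    linarith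
end

section
/- Let k : ℝᵈ × ℝᵈ → ℝ be a symmetric positive-semidefinite kernel that is continuously differentiable with all first-order partial derivatives bounded in absolute value by L_k ≥ 0, and such that k(x,y) ≤ k_max for all x, y ∈ ℝᵈ, where k_max > 0. Fix a test point x_ref ∈ ℝᵈ, a noise level σ > 0, and n ∈ ℕ. For data points X = (x₁,…,xₙ) ∈ (ℝᵈ)ⁿ, let σ²_X(x_ref) := k(x_ref,x_ref) − k_X(x_ref)ᵀ (K_X + σ²·I)⁻¹ k_X(x_ref) denote the GP posterior variance at x_ref, where K_X = [k(x_i,x_j)]_{i,j=1}^{n} and k_X(x_ref) = (k(x₁,x_ref),…,k(xₙ,x_ref))ᵀ. Then for every j ∈ {1,…,n} and every coordinate index i ∈ {1,…,d}, the partial derivative of σ²_X(x_ref) with respect to the i-th coordinate of the j-th data point x_j satisfies |∂σ²_X(x_ref)/∂x_{ij}| ≤ (2·L_k·√k_max)/σ + (2·L_k·√n·k_max)/σ². -/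
open Matrix

/-- The kernel matrix `[k(p i, p j)]_{i,j}` of a tuple of points. -/
noncomputable def kerMat {α : Type*} {m : ℕ} (k : α → α → ℝ) (p : Fin m → α) :
    Matrix (Fin m) (Fin m) ℝ :=
  Matrix.of fun i j => k (p i) (p j)

/-- The GP posterior variance at a test point `z` given data points `p` and
noise variance `σ²`:
`σ²_p(z) = k(z,z) − k_p(z)ᵀ (K_p + σ² I)⁻¹ k_p(z)`. -/
noncomputable def postVar {α : Type*} {m : ℕ} (k : α → α → ℝ) (σ : ℝ) (p : Fin m → α)
    (z : α) : ℝ :=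
  k z z - (fun i => k (p i) z) ⬝ᵥ
    ((kerMat k p + σ ^ 2 • (1 : Matrix (Fin m) (Fin m) ℝ))⁻¹ *ᵥ fun i => k (p i) z)

/-!
Along the line `X + t • V` the posterior variance `k(z,z) - vᵀ A⁻¹ v`, with `A = K_X + σ² I`
and `v = k_X(z)`, has derivative `wᵀ K' w - 2 v'ᵀ w`, where `w = A⁻¹ v` and
`(A⁻¹)' = -A⁻¹ K' A⁻¹`. Moving only the point `x_j` makes `v'` supported at `j` and `K'`
supported on row and column `j`, with entries bounded by `L_k`, so the derivative is at most
`2 L_k |w_j| (1 + ‖w‖₁)`. Positive semidefiniteness of the kernel matrix of `(x₁, …, xₙ, z)`,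
tested against `(w, -1)`, gives `σ² ‖w‖² ≤ k(z,z) ≤ k_max`, whence `|w_j| ≤ √k_max / σ` and
`‖w‖₁ ≤ √n √k_max / σ`.
-/

section MatrixCalculus

variable {ι : Type*} [Fintype ι] {M : ℝ → Matrix ι ι ℝ} {t : ℝ}

theorem hasDerivAt_dotProduct_mulVec {u v : ℝ → ι → ℝ} {u' v' : ι → ℝ} {M' : Matrix ι ι ℝ}
    (hu : ∀ a, HasDerivAt (fun s => u s a) (u' a) t)
    (hM : ∀ a b, HasDerivAt (fun s => M s a b) (M' a b) t)
    (hv : ∀ b, HasDerivAt (fun s => v s b) (v' b) t) :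
    HasDerivAt (fun s => u s ⬝ᵥ (M s *ᵥ v s))
      (u' ⬝ᵥ (M t *ᵥ v t) + u t ⬝ᵥ (M' *ᵥ v t) + u t ⬝ᵥ (M t *ᵥ v')) t := by
  simp only [dotProduct, Matrix.mulVec]
  refine (HasDerivAt.fun_sum fun a (_ : a ∈ Finset.univ) => (hu a).fun_mul
    (HasDerivAt.fun_sum fun b (_ : b ∈ Finset.univ) => (hM a b).fun_mul (hv b))).congr_deriv ?_
  simp only [Finset.sum_add_distrib, mul_add, Finset.mul_sum]
  ring

variable [DecidableEq ι]

theorem differentiableAt_det (hM : ∀ a b, DifferentiableAt ℝ (fun s => M s a b) t) :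
    DifferentiableAt ℝ (fun s => (M s).det) t := by
  simp only [Matrix.det_apply, Units.smul_def, zsmul_eq_mul]
  fun_prop

theorem differentiableAt_inv_apply (hM : ∀ a b, DifferentiableAt ℝ (fun s => M s a b) t)
    (hdet : (M t).det ≠ 0) (a b : ι) : DifferentiableAt ℝ (fun s => (M s)⁻¹ a b) t := by
  have hadj : (fun s => (M s)⁻¹ a b)
      = fun s => ((M s).det)⁻¹ * ((M s).updateRow b (Pi.single a 1)).det := by
    funext s
    rw [Matrix.inv_def, Matrix.smul_apply, Matrix.adjugate_apply, Ring.inverse_eq_inv',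
      smul_eq_mul]
  rw [hadj]
  refine ((differentiableAt_det hM).inv hdet).mul (differentiableAt_det fun c e => ?_)
  rcases eq_or_ne c b with rfl | hne
  · simp only [Matrix.updateRow_self]
    exact differentiableAt_const _
  · simpa only [Matrix.updateRow_ne hne] using hM c e

theorem hasDerivAt_inv_apply {M' : Matrix ι ι ℝ}
    (hM : ∀ a b, HasDerivAt (fun s => M s a b) (M' a b) t) (hdet : (M t).det ≠ 0) (a b : ι) :
    HasDerivAt (fun s => (M s)⁻¹ a b) ((-((M t)⁻¹ * M' * (M t)⁻¹)) a b) t := by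
  set B' : Matrix ι ι ℝ := Matrix.of fun a b => deriv (fun s => (M s)⁻¹ a b) t
  have hB : ∀ a b, HasDerivAt (fun s => (M s)⁻¹ a b) (B' a b) t := fun a b =>
    (differentiableAt_inv_apply (fun a b => (hM a b).differentiableAt) hdet a b).hasDerivAt
  -- Differentiating `M s * (M s)⁻¹ = 1`, which holds near `t`, gives `M' B + M B' = 0`.
  have hprod : M' * (M t)⁻¹ + M t * B' = 0 := by
    have hunit : ∀ᶠ s in nhds t, IsUnit (M s).det :=
      ((differentiableAt_det fun a b => (hM a b).differentiableAt).continuousAt.eventually_ne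
        hdet).mono fun _ h => isUnit_iff_ne_zero.mpr h
    ext a b
    have hconst : HasDerivAt (fun s => (M s * (M s)⁻¹) a b) 0 t :=
      (hasDerivAt_const t ((1 : Matrix ι ι ℝ) a b)).congr_of_eventuallyEq
        (hunit.mono fun s hs => by simp only [Matrix.mul_nonsing_inv _ hs])
    have hsum : HasDerivAt (fun s => (M s * (M s)⁻¹) a b)
        (∑ c, (M' a c * (M t)⁻¹ c b + M t a c * B' c b)) t := by
      simp only [Matrix.mul_apply]
      exact HasDerivAt.fun_sum fun c _ => (hM a c).mul (hB c b)
    simpa only [Matrix.add_apply, Matrix.mul_apply, Matrix.zero_apply, Finset.sum_add_distrib]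
      using hsum.unique hconst
  have hB' : B' = -((M t)⁻¹ * M' * (M t)⁻¹) := by
    have hunit : IsUnit (M t).det := isUnit_iff_ne_zero.mpr hdet
    calc B' = (M t)⁻¹ * (M t * B') := by
          rw [← Matrix.mul_assoc, Matrix.nonsing_inv_mul _ hunit, Matrix.one_mul]
      _ = _ := by
          rw [eq_neg_of_add_eq_zero_right hprod, Matrix.mul_neg, Matrix.mul_assoc]
  exact hB' ▸ hB a b

end MatrixCalculus

theorem Matrix.PosSemidef.add_sq_smul_one_posDef {ι : Type*} [Fintype ι] [DecidableEq ι]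
    {A : Matrix ι ι ℝ} (hA : A.PosSemidef) {σ : ℝ} (hσ : σ ≠ 0) : (A + σ ^ 2 • 1).PosDef :=
  Matrix.PosDef.posSemidef_add hA (Matrix.PosDef.one.smul (by positivity))

section GaussianProcess

variable {α : Type*} {n : ℕ} {k : α → α → ℝ}

/-- The weights `(K_p + σ² I)⁻¹ k_p(z)` of the GP posterior mean at `z`. -/
noncomputable def postWeights (k : α → α → ℝ) (σ : ℝ) (p : Fin n → α) (z : α) : Fin n → ℝ :=
  (kerMat k p + σ ^ 2 • (1 : Matrix (Fin n) (Fin n) ℝ))⁻¹ *ᵥ fun i => k (p i) z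

theorem kerMat_transpose (hsymm : ∀ x y, k x y = k y x) (p : Fin n → α) :
    (kerMat k p)ᵀ = kerMat k p := by
  ext a b
  exact hsymm _ _

theorem kerMat_quadForm_snoc_nonneg (hsymm : ∀ x y, k x y = k y x) (p : Fin n → α) (z : α)
    (hpsd : (kerMat k (Fin.snoc p z : Fin (n + 1) → α)).PosSemidef) (w : Fin n → ℝ) :
    0 ≤ w ⬝ᵥ (kerMat k p *ᵥ w) - 2 * (w ⬝ᵥ fun a => k (p a) z) + k z z := by
  have h := hpsd.dotProduct_mulVec_nonneg (Fin.snoc w (-1))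
  simp only [star_trivial, dotProduct, Matrix.mulVec, kerMat, Matrix.of_apply,
    Fin.sum_univ_castSucc, Fin.snoc_castSucc, Fin.snoc_last, hsymm z] at h
  refine h.trans_eq ?_
  simp only [dotProduct, Matrix.mulVec, kerMat, Matrix.of_apply, mul_add,
    Finset.sum_add_distrib, mul_comm (k _ z), mul_left_comm (w _) (-1), ← Finset.mul_sum]
  ring

theorem postWeights_dotProduct_self_le (hsymm : ∀ x y, k x y = k y x)
    (hpsd : ∀ (m : ℕ) (p : Fin m → α), (kerMat k p).PosSemidef) {σ : ℝ} (hσ : σ ≠ 0)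
    (p : Fin n → α) (z : α) :
    σ ^ 2 * (postWeights k σ p z ⬝ᵥ postWeights k σ p z) ≤ k z z := by
  set w := postWeights k σ p z
  have hdet : IsUnit (kerMat k p + σ ^ 2 • 1).det :=
    isUnit_iff_ne_zero.mpr ((hpsd n p).add_sq_smul_one_posDef hσ).det_pos.ne'
  have hAw : (kerMat k p + σ ^ 2 • 1) *ᵥ w = fun a => k (p a) z := by
    simp only [w, postWeights, Matrix.mulVec_mulVec, Matrix.mul_nonsing_inv _ hdet,
      Matrix.one_mulVec]
  have hwv : w ⬝ᵥ (fun a => k (p a) z) = w ⬝ᵥ (kerMat k p *ᵥ w) + σ ^ 2 * (w ⬝ᵥ w) := by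
    rw [← hAw, Matrix.add_mulVec, dotProduct_add, Matrix.smul_mulVec, Matrix.one_mulVec,
      dotProduct_smul, smul_eq_mul]
  have hK := (hpsd n p).dotProduct_mulVec_nonneg w
  have hsnoc := kerMat_quadForm_snoc_nonneg hsymm p z (hpsd _ _) w
  have hww : 0 ≤ σ ^ 2 * (w ⬝ᵥ w) :=
    mul_nonneg (sq_nonneg σ) (Finset.sum_nonneg fun a _ => mul_self_nonneg (w a))
  simp only [star_trivial] at hK
  linarith

theorem hasDerivAt_postVar (hsymm : ∀ x y, k x y = k y x) {σ : ℝ} {p : ℝ → Fin n → α} {z : α}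
    {t : ℝ} {K' : Matrix (Fin n) (Fin n) ℝ} {v' : Fin n → ℝ}
    (hK : ∀ a b, HasDerivAt (fun s => k (p s a) (p s b)) (K' a b) t)
    (hv : ∀ a, HasDerivAt (fun s => k (p s a) z) (v' a) t)
    (hdet : (kerMat k (p t) + σ ^ 2 • (1 : Matrix (Fin n) (Fin n) ℝ)).det ≠ 0) :
    HasDerivAt (fun s => postVar k σ (p s) z)
      (postWeights k σ (p t) z ⬝ᵥ (K' *ᵥ postWeights k σ (p t) z)
        - 2 * (v' ⬝ᵥ postWeights k σ (p t) z)) t := by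
  set B := (kerMat k (p t) + σ ^ 2 • (1 : Matrix (Fin n) (Fin n) ℝ))⁻¹
  set v : Fin n → ℝ := fun a => k (p t a) z
  have hBsymm : ∀ u, v ⬝ᵥ (B *ᵥ u) = postWeights k σ (p t) z ⬝ᵥ u := fun u => by
    rw [Matrix.dotProduct_mulVec, ← Matrix.mulVec_transpose, Matrix.transpose_nonsing_inv,
      Matrix.transpose_add, kerMat_transpose hsymm, Matrix.transpose_smul, Matrix.transpose_one]
    rfl
  have hinv := hasDerivAt_inv_apply
    (M := fun s => kerMat k (p s) + σ ^ 2 • (1 : Matrix (Fin n) (Fin n) ℝ))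
    (fun a b => (hK a b).add_const _) hdet
  refine ((hasDerivAt_dotProduct_mulVec hv hinv hv).const_sub (k z z)).congr_deriv ?_
  rw [Matrix.neg_mulVec, dotProduct_neg, ← Matrix.mulVec_mulVec, ← Matrix.mulVec_mulVec,
    hBsymm, hBsymm, dotProduct_comm _ v']
  unfold postWeights
  ring

end GaussianProcess

theorem hasLineDerivAt_postVar {E : Type*} [NormedAddCommGroup E] [NormedSpace ℝ E] {n : ℕ}
    {k : E → E → ℝ} (hsymm : ∀ x y, k x y = k y x)
    (hk : Differentiable ℝ fun q : E × E => k q.1 q.2) {σ : ℝ} {X : Fin n → E}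
    (hdet : (kerMat k X + σ ^ 2 • (1 : Matrix (Fin n) (Fin n) ℝ)).det ≠ 0) (z : E)
    (V : Fin n → E) :
    HasLineDerivAt ℝ (fun Y => postVar k σ Y z)
      (postWeights k σ X z ⬝ᵥ
          (Matrix.of (fun a b => fderiv ℝ (fun q : E × E => k q.1 q.2) (X a, X b) (V a, V b))
            *ᵥ postWeights k σ X z)
        - 2 * ((fun a => fderiv ℝ (fun q : E × E => k q.1 q.2) (X a, z) (V a, 0))
          ⬝ᵥ postWeights k σ X z)) X V := by
  have hline : ∀ a, HasDerivAt (fun s : ℝ => (X + s • V) a) (V a) 0 := fun a => by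
    simpa using ((hasDerivAt_id (0 : ℝ)).smul_const (V a)).const_add (X a)
  have h := hasDerivAt_postVar (p := fun s => X + s • V) (t := 0) hsymm
    (fun a b => (hk _).hasFDerivAt.comp_hasDerivAt 0 ((hline a).prodMk (hline b)))
    (fun a => (hk _).hasFDerivAt.comp_hasDerivAt 0 ((hline a).prodMk (hasDerivAt_const 0 z)))
    (by simpa only [zero_smul, add_zero] using hdet)
  simp only [zero_smul, add_zero] at h
  exact h

section SingleDirection

variable {ι : Type*} [DecidableEq ι] {j : ι} {L : ℝ} {E : Type*} [TopologicalSpace E]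
  [AddCommGroup E] [Module ℝ E] (D : E × E →L[ℝ] ℝ) {u : E}

theorem abs_apply_single_fst_le (hu : |D (u, 0)| ≤ L) (b : ι) :
    |D ((Pi.single j u : ι → E) b, 0)| ≤ if b = j then L else 0 := by
  rcases eq_or_ne b j with rfl | hb
  · simpa using hu
  · simp [hb, Prod.mk_zero_zero]

theorem abs_apply_single_snd_le (hu : |D (0, u)| ≤ L) (b : ι) :
    |D (0, (Pi.single j u : ι → E) b)| ≤ if b = j then L else 0 := by
  rcases eq_or_ne b j with rfl | hb
  · simpa using hu
  · simp [hb, Prod.mk_zero_zero]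

theorem abs_apply_single_le (hu₁ : |D (u, 0)| ≤ L) (hu₂ : |D (0, u)| ≤ L) (a b : ι) :
    |D ((Pi.single j u : ι → E) a, (Pi.single j u : ι → E) b)|
      ≤ (if a = j then L else 0) + (if b = j then L else 0) := by
  calc _ = |D ((Pi.single j u : ι → E) a, 0) + D (0, (Pi.single j u : ι → E) b)| := by
        rw [← map_add, Prod.mk_add_mk, add_zero, zero_add]
    _ ≤ _ := (abs_add_le _ _).trans
        (add_le_add (abs_apply_single_fst_le D hu₁ a) (abs_apply_single_snd_le D hu₂ b))

end SingleDirection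

section CoordinateBounds

variable {ι : Type*} [Fintype ι]

theorem abs_apply_le_of_dotProduct_self_le {w : ι → ℝ} {r : ℝ} (hr : 0 ≤ r)
    (hw : w ⬝ᵥ w ≤ r ^ 2) (j : ι) : |w j| ≤ r := by
  refine abs_le_of_sq_le_sq ((Finset.single_le_sum (f := fun b => w b ^ 2)
    (fun _ _ => sq_nonneg _) (Finset.mem_univ j)).trans ?_) hr
  simpa only [dotProduct, sq] using hw

theorem sum_abs_le_of_dotProduct_self_le {w : ι → ℝ} {r : ℝ} (hr : 0 ≤ r)
    (hw : w ⬝ᵥ w ≤ r ^ 2) : ∑ b, |w b| ≤ √(Fintype.card ι) * r := by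
  refine (le_abs_self _).trans (abs_le_of_sq_le_sq ?_ (by positivity))
  calc (∑ b, |w b|) ^ 2 ≤ Fintype.card ι * ∑ b, |w b| ^ 2 := sq_sum_le_card_mul_sum_sq
    _ ≤ Fintype.card ι * r ^ 2 := by
        gcongr
        simpa only [sq_abs, dotProduct, sq, abs_mul_abs_self] using hw
    _ = (√(Fintype.card ι) * r) ^ 2 := by rw [mul_pow, Real.sq_sqrt (Nat.cast_nonneg _)]

variable [DecidableEq ι] {j : ι} {L : ℝ}

theorem abs_dotProduct_le_of_abs_apply_le {v : ι → ℝ} (hv : ∀ b, |v b| ≤ if b = j then L else 0)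
    (w : ι → ℝ) : |v ⬝ᵥ w| ≤ L * |w j| :=
  calc |v ⬝ᵥ w| ≤ ∑ b, (if b = j then L else 0) * |w b| := by
        refine (Finset.abs_sum_le_sum_abs _ _).trans (Finset.sum_le_sum fun b _ => ?_)
        rw [abs_mul]
        exact mul_le_mul_of_nonneg_right (hv b) (abs_nonneg _)
    _ = L * |w j| := by
        simp only [ite_mul, zero_mul, Finset.sum_ite_eq', Finset.mem_univ, if_true]

theorem abs_dotProduct_mulVec_le_of_abs_apply_le {A : Matrix ι ι ℝ}
    (hA : ∀ a b, |A a b| ≤ (if a = j then L else 0) + (if b = j then L else 0)) (w : ι → ℝ) :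
    |w ⬝ᵥ (A *ᵥ w)| ≤ 2 * L * |w j| * ∑ b, |w b| :=
  calc |w ⬝ᵥ (A *ᵥ w)|
      ≤ ∑ a, ∑ b, |w a| * (((if a = j then L else 0) + (if b = j then L else 0)) * |w b|) := by
        simp only [dotProduct, Matrix.mulVec, Finset.mul_sum]
        refine (Finset.abs_sum_le_sum_abs _ _).trans (Finset.sum_le_sum fun a _ =>
          (Finset.abs_sum_le_sum_abs _ _).trans (Finset.sum_le_sum fun b _ => ?_))
        rw [abs_mul, abs_mul]
        gcongr
        exact hA a b
    _ = 2 * L * |w j| * ∑ b, |w b| := by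
        simp only [mul_add, add_mul, Finset.sum_add_distrib, ite_mul, mul_ite, zero_mul, mul_zero,
          Finset.sum_ite_irrel, Finset.sum_const_zero, Finset.sum_ite_eq', Finset.mem_univ, if_true,
          ← Finset.mul_sum, ← Finset.sum_mul]
        ring

end CoordinateBounds

/-- For a symmetric PSD kernel `k` that is continuously
differentiable, with all first-order partial derivatives bounded in absolute
value by `L_k` and with `k ≤ k_max`, the partial derivative of the GP posterior
variance `σ²_X(x_ref)` with respect to the `i`-th coordinate of the `j`-th data
point is bounded in absolute value by `2L_k√k_max/σ + 2L_k√n·k_max/σ²`. -/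
theorem posterior_variance_partial_derivative_bound (d : ℕ)
    (k : (Fin d → ℝ) → (Fin d → ℝ) → ℝ)
    (hsymm : ∀ x y, k x y = k y x)
    (hpsd : ∀ (m : ℕ) (p : Fin m → (Fin d → ℝ)), (kerMat k p).PosSemidef)
    (hsmooth : ContDiff ℝ 1 (fun p : (Fin d → ℝ) × (Fin d → ℝ) => k p.1 p.2))
    (Lk : ℝ) (hLk : 0 ≤ Lk)
    (hderiv : ∀ (p : (Fin d → ℝ) × (Fin d → ℝ)) (i : Fin d),
      |fderiv ℝ (fun q : (Fin d → ℝ) × (Fin d → ℝ) => k q.1 q.2) p (Pi.single i 1, 0)| ≤ Lk ∧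
      |fderiv ℝ (fun q : (Fin d → ℝ) × (Fin d → ℝ) => k q.1 q.2) p (0, Pi.single i 1)| ≤ Lk)
    (kmax : ℝ) (hkmax : 0 < kmax) (hkbound : ∀ x y, k x y ≤ kmax)
    (xref : Fin d → ℝ) (σ : ℝ) (hσ : 0 < σ) (n : ℕ)
    (X : Fin n → (Fin d → ℝ)) (j : Fin n) (i : Fin d) :
    |fderiv ℝ (fun Y : Fin n → (Fin d → ℝ) => postVar k σ Y xref) X
        (Pi.single j (Pi.single i 1))| ≤
      2 * Lk * Real.sqrt kmax / σ + 2 * Lk * Real.sqrt n * kmax / σ ^ 2 := by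
  by_cases hdiff : DifferentiableAt ℝ (fun Y : Fin n → (Fin d → ℝ) => postVar k σ Y xref) X
  swap
  · rw [fderiv_zero_of_not_differentiableAt hdiff, _root_.zero_apply, abs_zero]
    positivity
  have hdet := ((hpsd n X).add_sq_smul_one_posDef hσ.ne').det_pos.ne'
  rw [(hdiff.hasFDerivAt.hasLineDerivAt _).unique
    (hasLineDerivAt_postVar hsymm (hsmooth.differentiable one_ne_zero) hdet xref _)]
  set w := postWeights k σ X xref
  set r := √kmax / σ
  have hr : 0 ≤ r := by positivity
  have hw : w ⬝ᵥ w ≤ r ^ 2 := by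
    rw [div_pow, Real.sq_sqrt hkmax.le, le_div_iff₀ (by positivity), mul_comm]
    exact (postWeights_dotProduct_self_le hsymm hpsd hσ.ne' X xref).trans (hkbound _ _)
  have hKterm := abs_dotProduct_mulVec_le_of_abs_apply_le (fun a b =>
    abs_apply_single_le (j := j) _ (hderiv (X a, X b) i).1 (hderiv (X a, X b) i).2 a b) w
  have hvterm := abs_dotProduct_le_of_abs_apply_le (fun b =>
    abs_apply_single_fst_le (j := j) _ (hderiv (X b, xref) i).1 b) w
  have hwj := abs_apply_le_of_dotProduct_self_le hr hw j
  have hS := sum_abs_le_of_dotProduct_self_le hr hw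
  rw [Fintype.card_fin] at hS
  calc _ ≤ |w ⬝ᵥ (_ *ᵥ w)| + 2 * |_ ⬝ᵥ w| := (abs_sub _ _).trans (by rw [abs_mul, abs_two])
    _ ≤ 2 * Lk * r * (√n * r) + 2 * (Lk * r) := by
        gcongr
        · exact hKterm.trans (by gcongr)
        · exact hvterm.trans (by gcongr)
    _ = _ := by
        simp only [r]
        field_simp
        linear_combination Lk * √n * Real.mul_self_sqrt hkmax.le
end

section
/- Let k : ℝᵈ × ℝᵈ → ℝ be a symmetric positive-semidefinite kernel that is Lipschitz continuous (with respect to the Euclidean norm on ℝᵈ × ℝᵈ) with constant L_k ≥ 0 and satisfies 0 ≤ k(x,y) ≤ k_max for all x, y ∈ ℝᵈ, where k_max > 0. Fix a noise level σ_w > 0, data points X = (x₁,…,x_t) ∈ (ℝᵈ)ᵗ, and reference points r₁,…,r_N ∈ ℝᵈ; write R_i := (r₁,…,r_i) for 0 ≤ i ≤ N. For points ξ, x ∈ ℝᵈ, define the mutual-information difference ΔI(ξ, x) := Σ_{i=0}^{N−1} ½·[ log(σ_w² + σ²_{X ⌢ R_i ⌢ (x)}(r_{i+1})) − log(σ_w²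 + σ²_{X ⌢ R_i ⌢ (ξ)}(r_{i+1})) ], where σ²_S(z) denotes the GP posterior variance at z given the data tuple S with noise variance σ_w², and ⌢ denotes concatenation of tuples. Then there exists a constant L ≥ 0, depending only on L_k, k_max, σ_w, d, t and N, such that for all ξ, x ∈ ℝᵈ: ΔI(ξ, x) ≤ (N/2)·log(1 + min{k_max, L·‖ξ − x‖₂}/σ_w²). -/
/-!
Write `vₓ` and `v_ξ` for the posterior variances at `r i` after the data are extended by `x`,
respectively by `ξ`. The posterior variance is the minimal mean squared error of a linear
predictor, so `vₓ` is at most the error, for the data ending in `x`, of the predictor that is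
optimal for the data ending in `ξ`. Those optimal weights have `ℓ¹`-norm at most `n k_max / σ²`,
and every kernel entry moves by at most `L_k √2 ‖ξ - x‖`, so `vₓ - v_ξ ≤ L ‖ξ - x‖`; moreover
`vₓ - v_ξ ≤ k_max` because posterior variances lie in `[0, k(z, z)]`. Each summand is then at
most `½ log (1 + min k_max (L ‖ξ - x‖) / σ²)`, since `(σ² + vₓ) ≤ (σ² + v_ξ) (1 + (vₓ - v_ξ) / σ²)`.
-/

open Matrix

section EntrywiseBounds

variable {ι : Type*} [Fintype ι] {ε : ℝ}

theorem abs_dotProduct_le_mul_sum_abs {v w : ι → ℝ} (hw : ∀ i, |w i| ≤ ε) :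
    |v ⬝ᵥ w| ≤ ε * ∑ i, |v i| := by
  calc |v ⬝ᵥ w| ≤ ∑ i, |v i * w i| := Finset.abs_sum_le_sum_abs _ _
    _ ≤ ∑ i, ε * |v i| := Finset.sum_le_sum fun i _ => by
      rw [abs_mul, mul_comm ε]
      exact mul_le_mul_of_nonneg_left (hw i) (abs_nonneg _)
    _ = ε * ∑ i, |v i| := (Finset.mul_sum _ _ _).symm

theorem abs_dotProduct_mulVec_le {A : Matrix ι ι ℝ} (hA : ∀ i j, |A i j| ≤ ε) (v w : ι → ℝ) :
    |v ⬝ᵥ (A *ᵥ w)| ≤ ε * (∑ i, |v i|) * ∑ j, |w j| := by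
  have hAw (i : ι) : |(A *ᵥ w) i| ≤ ε * ∑ j, |w j| := by
    rw [mulVec, dotProduct_comm]
    exact abs_dotProduct_le_mul_sum_abs (hA i)
  calc |v ⬝ᵥ (A *ᵥ w)| ≤ (ε * ∑ j, |w j|) * ∑ i, |v i| := abs_dotProduct_le_mul_sum_abs hAw
    _ = ε * (∑ i, |v i|) * ∑ j, |w j| := by ring

end EntrywiseBounds

section PosteriorVariance

variable {α : Type*} {n : ℕ} (k : α → α → ℝ) (σ : ℝ) (p : Fin n → α) (z : α)

noncomputable def kerVec : Fin n → ℝ := fun i => k (p i) z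

noncomputable def noisyKerMat : Matrix (Fin n) (Fin n) ℝ := kerMat k p + σ ^ 2 • 1

/-- The mean squared error `E[(f z - ∑ᵢ uᵢ yᵢ)²]` of the linear predictor with weights `u`, for
`f ∼ GP(0, k)` observed as `yᵢ = f (p i) + 𝒩(0, σ²)`. -/
noncomputable def predictionError (u : Fin n → ℝ) : ℝ :=
  k z z - 2 * (u ⬝ᵥ kerVec k p z) + u ⬝ᵥ (noisyKerMat k σ p *ᵥ u)

noncomputable def optimalWeights : Fin n → ℝ := (noisyKerMat k σ p)⁻¹ *ᵥ kerVec k p z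

variable {k σ p z}

theorem postVar_def : postVar k σ p z =
    k z z - kerVec k p z ⬝ᵥ ((noisyKerMat k σ p)⁻¹ *ᵥ kerVec k p z) := rfl

theorem noisyKerMat_posDef (hK : (kerMat k p).PosSemidef) (hσ : σ ≠ 0) :
    (noisyKerMat k σ p).PosDef := by
  rw [noisyKerMat, smul_one_eq_diagonal]
  exact PosDef.posSemidef_add hK (posDef_diagonal_iff.mpr fun _ => by positivity)

theorem noisyKerMat_mulVec_optimalWeights (hK : (kerMat k p).PosSemidef) (hσ : σ ≠ 0) :
    noisyKerMat k σ p *ᵥ optimalWeights k σ p z = kerVec k p z := by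
  rw [optimalWeights, mulVec_mulVec,
    mul_nonsing_inv _ (noisyKerMat_posDef hK hσ).det_pos.ne'.isUnit, one_mulVec]

theorem dotProduct_noisyKerMat_mulVec (u : Fin n → ℝ) :
    u ⬝ᵥ (noisyKerMat k σ p *ᵥ u) = u ⬝ᵥ (kerMat k p *ᵥ u) + σ ^ 2 * (u ⬝ᵥ u) := by
  rw [noisyKerMat, add_mulVec, dotProduct_add, smul_mulVec, one_mulVec, dotProduct_smul,
    smul_eq_mul]

theorem predictionError_nonneg (hK : (kerMat k (Fin.snoc p z)).PosSemidef) (u : Fin n → ℝ) :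
    0 ≤ predictionError k σ p z u := by
  have hsymm (j : Fin n) : k z (p j) = k (p j) z := by
    simpa [kerMat] using hK.isHermitian.apply (Fin.castSucc j) (Fin.last n)
  have hext : Fin.snoc u (-1) ⬝ᵥ (kerMat k (Fin.snoc p z) *ᵥ Fin.snoc u (-1)) =
      u ⬝ᵥ (kerMat k p *ᵥ u) - 2 * (u ⬝ᵥ kerVec k p z) + k z z := by
    simp only [dotProduct, mulVec, kerMat, kerVec, of_apply, Fin.sum_univ_castSucc,
      Fin.snoc_castSucc, Fin.snoc_last, hsymm]
    simp only [mul_add, Finset.sum_add_distrib, Finset.mul_sum]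
    ring_nf
    simp only [Finset.sum_neg_distrib, mul_comm (k (p _) z) (u _), ← Finset.sum_mul]
    ring
  have hquad := hK.dotProduct_mulVec_nonneg (Fin.snoc u (-1))
  rw [star_trivial, hext] at hquad
  rw [predictionError, dotProduct_noisyKerMat_mulVec]
  have huu : 0 ≤ u ⬝ᵥ u := by simpa using dotProduct_self_star_nonneg u
  nlinarith [mul_nonneg (sq_nonneg σ) huu]

theorem postVar_eq_predictionError (hK : (kerMat k p).PosSemidef) (hσ : σ ≠ 0) :
    postVar k σ p z = predictionError k σ p z (optimalWeights k σ p z) := by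
  rw [predictionError, noisyKerMat_mulVec_optimalWeights hK hσ, postVar_def, ← optimalWeights,
    dotProduct_comm (kerVec k p z)]
  ring

theorem postVar_le_predictionError (hK : (kerMat k p).PosSemidef) (hσ : σ ≠ 0)
    (u : Fin n → ℝ) : postVar k σ p z ≤ predictionError k σ p z u := by
  set M := noisyKerMat k σ p
  set w := optimalWeights k σ p z
  have hM : M.PosDef := noisyKerMat_posDef hK hσ
  have hMw : M *ᵥ w = kerVec k p z := noisyKerMat_mulVec_optimalWeights hK hσ
  have hsymm : w ⬝ᵥ (M *ᵥ u) = u ⬝ᵥ kerVec k p z := by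
    rw [dotProduct_mulVec, ← mulVec_transpose, ← conjTranspose_eq_transpose_of_trivial,
      hM.isHermitian.eq, hMw, dotProduct_comm]
  -- the excess error of `u` over the optimum is the `M`-norm of `u - w`
  have hexcess := hM.posSemidef.dotProduct_mulVec_nonneg (u - w)
  rw [star_trivial, mulVec_sub, dotProduct_sub, sub_dotProduct, sub_dotProduct, hMw, hsymm]
    at hexcess
  rw [postVar_eq_predictionError hK hσ, predictionError, predictionError, hMw]
  linarith [dotProduct_comm u (kerVec k p z), dotProduct_comm w (kerVec k p z)]

theorem postVar_le_self (hK : (kerMat k p).PosSemidef) (hσ : σ ≠ 0) :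
    postVar k σ p z ≤ k z z := by
  simpa [predictionError] using postVar_le_predictionError (z := z) hK hσ 0

theorem postVar_nonneg (hK : (kerMat k p).PosSemidef)
    (hKz : (kerMat k (Fin.snoc p z)).PosSemidef) (hσ : σ ≠ 0) : 0 ≤ postVar k σ p z :=
  postVar_eq_predictionError hK hσ ▸ predictionError_nonneg hKz _

theorem sum_abs_optimalWeights_le {κ : ℝ} (hK : (kerMat k p).PosSemidef) (hσ : σ ≠ 0)
    (hκ : 0 ≤ κ) (hb : ∀ i, |k (p i) z| ≤ κ) :
    ∑ i, |optimalWeights k σ p z i| ≤ n * κ / σ ^ 2 := by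
  set w := optimalWeights k σ p z
  set S := ∑ i, |w i|
  have hσ2 : 0 < σ ^ 2 := by positivity
  have hcoercive : σ ^ 2 * (w ⬝ᵥ w) ≤ κ * S := calc
    σ ^ 2 * (w ⬝ᵥ w) ≤ w ⬝ᵥ (noisyKerMat k σ p *ᵥ w) := by
      have := hK.dotProduct_mulVec_nonneg w
      rw [star_trivial] at this
      rw [dotProduct_noisyKerMat_mulVec]
      linarith
    _ = w ⬝ᵥ kerVec k p z := by rw [noisyKerMat_mulVec_optimalWeights hK hσ]
    _ ≤ κ * S := (le_abs_self _).trans (abs_dotProduct_le_mul_sum_abs hb)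
  have hCS : S ^ 2 ≤ n * (w ⬝ᵥ w) := by
    simpa [sq_abs, dotProduct, pow_two] using
      sq_sum_le_card_mul_sum_sq (s := Finset.univ) (f := fun i => |w i|)
  rw [le_div_iff₀ hσ2]
  have hS0 : 0 ≤ S := Finset.sum_nonneg fun i _ => abs_nonneg (w i)
  rcases hS0.eq_or_lt with hS | hS
  · rw [← hS, zero_mul]
    positivity
  · refine le_of_mul_le_mul_left ?_ hS
    nlinarith

theorem predictionError_sub_le {p p' : Fin n → α} {ε : ℝ}
    (hvec : ∀ i, |k (p' i) z - k (p i) z| ≤ ε)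
    (hmat : ∀ i j, |k (p' i) (p' j) - k (p i) (p j)| ≤ ε) (u : Fin n → ℝ) :
    predictionError k σ p' z u - predictionError k σ p z u ≤
      ε * (2 * ∑ i, |u i| + (∑ i, |u i|) ^ 2) := by
  have hlin := abs_dotProduct_le_mul_sum_abs (v := u) (w := kerVec k p' z - kerVec k p z) hvec
  have hquad := abs_dotProduct_mulVec_le (A := kerMat k p' - kerMat k p) hmat u u
  rw [dotProduct_sub] at hlin
  rw [sub_mulVec, dotProduct_sub] at hquad
  simp only [predictionError, dotProduct_noisyKerMat_mulVec]
  linarith [abs_le.mp hlin, abs_le.mp hquad]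

theorem postVar_sub_postVar_le {p p' : Fin n → α} {κ ε W : ℝ} (hK : (kerMat k p).PosSemidef)
    (hK' : (kerMat k p').PosSemidef) (hσ : σ ≠ 0) (hκ : 0 ≤ κ) (hb : ∀ i, |k (p i) z| ≤ κ)
    (hW : n * κ / σ ^ 2 ≤ W) (hε : 0 ≤ ε) (hvec : ∀ i, |k (p' i) z - k (p i) z| ≤ ε)
    (hmat : ∀ i j, |k (p' i) (p' j) - k (p i) (p j)| ≤ ε) :
    postVar k σ p' z - postVar k σ p z ≤ ε * (2 * W + W ^ 2) := by
  set w := optimalWeights k σ p z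
  have hSW : ∑ i, |w i| ≤ W := (sum_abs_optimalWeights_le hK hσ hκ hb).trans hW
  calc postVar k σ p' z - postVar k σ p z
      ≤ predictionError k σ p' z w - predictionError k σ p z w := by
        rw [postVar_eq_predictionError hK hσ]
        linarith [postVar_le_predictionError (z := z) hK' hσ w]
    _ ≤ ε * (2 * ∑ i, |w i| + (∑ i, |w i|) ^ 2) := predictionError_sub_le hvec hmat w
    _ ≤ ε * (2 * W + W ^ 2) := by gcongr

end PosteriorVariance

section LipschitzKernel

variable {E : Type*} [SeminormedAddCommGroup E] {k : E → E → ℝ} {Lk : ℝ}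

theorem abs_sub_le_of_lipschitz (hLk : 0 ≤ Lk)
    (hlip : ∀ x y x' y' : E, |k x y - k x' y'| ≤ Lk * √(‖x - x'‖ ^ 2 + ‖y - y'‖ ^ 2))
    {a a' c c' : E} {δ : ℝ} (ha : ‖a - a'‖ ≤ δ) (hc : ‖c - c'‖ ≤ δ) :
    |k a c - k a' c'| ≤ Lk * √2 * δ := by
  have hδ : 0 ≤ δ := (norm_nonneg _).trans ha
  calc |k a c - k a' c'| ≤ Lk * √(‖a - a'‖ ^ 2 + ‖c - c'‖ ^ 2) := hlip a c a' c'
    _ ≤ Lk * √(2 * δ ^ 2) := by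
      have ha2 := pow_le_pow_left₀ (norm_nonneg _) ha 2
      have hc2 := pow_le_pow_left₀ (norm_nonneg _) hc 2
      gcongr
      linarith
    _ = Lk * √2 * δ := by rw [Real.sqrt_mul zero_le_two, Real.sqrt_sq hδ, mul_assoc]

theorem norm_append_sub_append_le {m : ℕ} (q : Fin m → E) (x ξ : E) (j : Fin (m + 1)) :
    ‖Fin.append q (fun _ : Fin 1 => x) j - Fin.append q (fun _ : Fin 1 => ξ) j‖ ≤ ‖x - ξ‖ := by
  refine Fin.addCases (fun i => ?_) (fun i => ?_) j <;> simp

theorem postVar_append_le (hpsd : ∀ (m : ℕ) (p : Fin m → E), (kerMat k p).PosSemidef)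
    (hLk : 0 ≤ Lk)
    (hlip : ∀ x y x' y' : E, |k x y - k x' y'| ≤ Lk * √(‖x - x'‖ ^ 2 + ‖y - y'‖ ^ 2))
    {κ : ℝ} (hkbound : ∀ x y, 0 ≤ k x y ∧ k x y ≤ κ) {σ : ℝ} (hσ : σ ≠ 0) {m : ℕ} {W : ℝ}
    (hW : ((m + 1 : ℕ) : ℝ) * κ / σ ^ 2 ≤ W) (q : Fin m → E) (x ξ z : E) :
    postVar k σ (Fin.append q fun _ : Fin 1 => x) z ≤
      postVar k σ (Fin.append q fun _ : Fin 1 => ξ) z +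
        min κ ((2 * W + W ^ 2) * (Lk * √2) * ‖ξ - x‖) := by
  set px := Fin.append q fun _ : Fin 1 => x
  set pξ := Fin.append q fun _ : Fin 1 => ξ
  have hκ : 0 ≤ κ := (hkbound z z).1.trans (hkbound z z).2
  have habs (a b : E) : |k a b| ≤ κ := abs_le.mpr ⟨by linarith [hkbound a b], (hkbound a b).2⟩
  have hnonneg : 0 ≤ postVar k σ pξ z := postVar_nonneg (hpsd _ _) (hpsd _ _) hσ
  have hle_κ : postVar k σ px z ≤ postVar k σ pξ z + κ := by
    linarith [postVar_le_self (z := z) (hpsd _ px) hσ, hkbound z z]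
  have hdist (j : Fin (m + 1)) : ‖px j - pξ j‖ ≤ ‖ξ - x‖ :=
    (norm_append_sub_append_le q x ξ j).trans_eq (norm_sub_rev x ξ)
  have hle_lip : postVar k σ px z - postVar k σ pξ z ≤ (2 * W + W ^ 2) * (Lk * √2) * ‖ξ - x‖ :=
    (postVar_sub_postVar_le (z := z) (hpsd _ pξ) (hpsd _ px) hσ hκ (fun i => habs _ _) hW
      (by positivity : 0 ≤ Lk * √2 * ‖ξ - x‖)
      (fun i => abs_sub_le_of_lipschitz hLk hlip (hdist i) (by simp))
      (fun i j => abs_sub_le_of_lipschitz hLk hlip (hdist i) (hdist j))).trans_eq (by ring)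
  have hmin := le_min (by linarith : postVar k σ px z - postVar k σ pξ z ≤ κ) hle_lip
  linarith

end LipschitzKernel

theorem log_add_sub_log_add_le {a v v' μ : ℝ} (ha : 0 < a) (hv : 0 ≤ v) (hv' : 0 ≤ v')
    (hμ : 0 ≤ μ) (h : v ≤ v' + μ) :
    Real.log (a + v) - Real.log (a + v') ≤ Real.log (1 + μ / a) := by
  have hprod : a + v ≤ (a + v') * (1 + μ / a) := by
    have : (a + v') * (1 + μ / a) = a + v' + μ + v' * μ / a := by field_simp; ring
    rw [this]
    linarith [div_nonneg (mul_nonneg hv' hμ) ha.le]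
  rw [sub_le_iff_le_add', ← Real.log_mul (by positivity) (by positivity)]
  exact Real.log_le_log (by positivity) hprod

theorem mutual_information_difference_bound_general (d : ℕ)
    (k : EuclideanSpace ℝ (Fin d) → EuclideanSpace ℝ (Fin d) → ℝ)
    (hpsd : ∀ (m : ℕ) (p : Fin m → EuclideanSpace ℝ (Fin d)), (kerMat k p).PosSemidef)
    (Lk : ℝ) (hLk : 0 ≤ Lk)
    (hlip : ∀ x y x' y' : EuclideanSpace ℝ (Fin d),
      |k x y - k x' y'| ≤ Lk * Real.sqrt (‖x - x'‖ ^ 2 + ‖y - y'‖ ^ 2))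
    (kmax : ℝ)
    (hkbound : ∀ x y, 0 ≤ k x y ∧ k x y ≤ kmax)
    (σw : ℝ) (hσw : 0 < σw) (t N : ℕ) :
    ∃ L : ℝ, 0 ≤ L ∧
      ∀ (X : Fin t → EuclideanSpace ℝ (Fin d)) (r : Fin N → EuclideanSpace ℝ (Fin d))
        (ξ x : EuclideanSpace ℝ (Fin d)),
        ∑ i : Fin N, (1 / 2 : ℝ) *
          (Real.log (σw ^ 2 + postVar k σw
              (Fin.append (Fin.append X fun j : Fin i.val => r (Fin.castLE i.isLt.le j))
                fun _ : Fin 1 => x) (r i)) -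
           Real.log (σw ^ 2 + postVar k σw
              (Fin.append (Fin.append X fun j : Fin i.val => r (Fin.castLE i.isLt.le j))
                fun _ : Fin 1 => ξ) (r i))) ≤
        (N / 2 : ℝ) * Real.log (1 + min kmax (L * ‖ξ - x‖) / σw ^ 2) := by
  have hkmax : 0 ≤ kmax := (hkbound 0 0).1.trans (hkbound 0 0).2
  set W : ℝ := ((t + N : ℕ) : ℝ) * kmax / σw ^ 2
  refine ⟨(2 * W + W ^ 2) * (Lk * √2), by positivity, fun X r ξ x => ?_⟩
  calc _ ≤ Finset.univ.card • ((1 / 2 : ℝ) *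
        Real.log (1 + min kmax ((2 * W + W ^ 2) * (Lk * √2) * ‖ξ - x‖) / σw ^ 2)) := by
        refine Finset.sum_le_card_nsmul _ _ _ fun i _ => ?_
        have hW : ((t + i.val + 1 : ℕ) : ℝ) * kmax / σw ^ 2 ≤ W := by
          have hlen : ((t + i.val + 1 : ℕ) : ℝ) ≤ ((t + N : ℕ) : ℝ) := by
            exact_mod_cast (by omega : t + i.val + 1 ≤ t + N)
          exact div_le_div_of_nonneg_right (mul_le_mul_of_nonneg_right hlen hkmax) (by positivity)
        refine mul_le_mul_of_nonneg_left ?_ one_half_pos.le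
        exact log_add_sub_log_add_le (by positivity)
          (postVar_nonneg (hpsd _ _) (hpsd _ _) hσw.ne')
          (postVar_nonneg (hpsd _ _) (hpsd _ _) hσw.ne') (by positivity)
          (postVar_append_le hpsd hLk hlip hkbound hσw.ne' hW _ x ξ _)
    _ = _ := by
      rw [Finset.card_univ, Fintype.card_fin, nsmul_eq_mul]
      ring

/-- **Theorem 1 of the paper.** Let `k` be a symmetric PSD kernel
on `ℝᵈ` (with the Euclidean norm), Lipschitz with constant `L_k` with respect to
the Euclidean norm on `ℝᵈ × ℝᵈ`, and with values in `[0, k_max]`. Then there is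
a constant `L ≥ 0`, depending only on `L_k, k_max, σ_w, d, t, N`, such that for
all data points `X = (x₁,…,x_t)`, reference points `r₁,…,r_N`, and points
`ξ, x`, the mutual-information difference
`ΔI(ξ, x) = Σ_{i=0}^{N−1} ½ [log(σ_w² + σ²_{X⌢R_i⌢(x)}(r_{i+1})) −
log(σ_w² + σ²_{X⌢R_i⌢(ξ)}(r_{i+1}))]`
satisfies `ΔI(ξ, x) ≤ (N/2)·log(1 + min{k_max, L‖ξ − x‖₂}/σ_w²)`. -/
theorem mutual_information_difference_bound (d : ℕ)
    (k : EuclideanSpace ℝ (Fin d) → EuclideanSpace ℝ (Fin d) → ℝ)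
    (hsymm : ∀ x y, k x y = k y x)
    (hpsd : ∀ (m : ℕ) (p : Fin m → EuclideanSpace ℝ (Fin d)), (kerMat k p).PosSemidef)
    (Lk : ℝ) (hLk : 0 ≤ Lk)
    (hlip : ∀ x y x' y' : EuclideanSpace ℝ (Fin d),
      |k x y - k x' y'| ≤ Lk * Real.sqrt (‖x - x'‖ ^ 2 + ‖y - y'‖ ^ 2))
    (kmax : ℝ) (hkmax : 0 < kmax)
    (hkbound : ∀ x y, 0 ≤ k x y ∧ k x y ≤ kmax)
    (σw : ℝ) (hσw : 0 < σw) (t N : ℕ) :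
    ∃ L : ℝ, 0 ≤ L ∧
      ∀ (X : Fin t → EuclideanSpace ℝ (Fin d)) (r : Fin N → EuclideanSpace ℝ (Fin d))
        (ξ x : EuclideanSpace ℝ (Fin d)),
        ∑ i : Fin N, (1 / 2 : ℝ) *
          (Real.log (σw ^ 2 + postVar k σw
              (Fin.append (Fin.append X fun j : Fin i.val => r (Fin.castLE i.isLt.le j))
                fun _ : Fin 1 => x) (r i)) -
           Real.log (σw ^ 2 + postVar k σw
              (Fin.append (Fin.append X fun j : Fin i.val => r (Fin.castLE i.isLt.le j))
                fun _ : Fin 1 => ξ) (r i))) ≤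
        (N / 2 : ℝ) * Real.log (1 + min kmax (L * ‖ξ - x‖) / σw ^ 2) :=
  mutual_information_difference_bound_general d k hpsd Lk hLk hlip kmax hkbound σw hσw t N
end
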